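/- arXiv:1703.07979 — 2 statements merged into one kernel-verified Lean document; each statement's English description precedes it below -/
import Mathlib

section
/- Let f : ℝ → ℝ admit an entire complex extension with Taylor coefficients c_k = f^{(k)}(0)/k!, let m ≥ 1 be an integer, and suppose x ↦ f(x) x^{-m} is integrable on [1, ∞). Then the limit as ε → 0⁺ of [∫_ε^∞ f(x) x^{-m} dx − (Σ_{k=0}^{m-2} c_k/((m-k-1) ε^{m-k-1}) − c_{m-1} ln ε)] exists and equals the limit as a → ∞ of [c_{m-1} ln a + Σ_{k=m}^{∞} c_k a^{k-m+1}/(k-m+1)], and in particular the latter limit exists. -/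
/-!
Write `f(x) = Σ_{k<m} c_k x^k + x^m g(x)` with `g(x) = Σ_j c_{m+j} x^j`. Integrating term by term,
`Φ(x) = Σ_j c_{m+j} x^{j+1}/(j+1) + c_{m-1} ln x - Σ_{k<m-1} c_k / ((m-k-1) x^{m-k-1})`
is a primitive of `f(x)/x^m` on `(0, ∞)`. Integrability at infinity makes `Φ(a)` converge, as
`a → ∞`, to `L = Φ(ε) + ∫_ε^∞ f(x)/x^m dx` for every `ε > 0`. Hence the regularized integral at `ε`
is `L` minus the power series part of `Φ(ε)`, which vanishes as `ε → 0`, while the expression in `a`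
is `Φ(a)` plus the pole terms, which vanish as `a → ∞`.
-/

open Filter MeasureTheory Set

section EntirePowerSeries

variable {c : ℕ → ℝ}

theorem summable_norm_mul_pow_of_forall_summable (h : ∀ x : ℝ, Summable fun k => c k * x ^ k)
    (x : ℝ) : Summable fun k => ‖c k * x ^ k‖ := by
  set R : ℝ := 2 * |x| + 1
  have hR : 0 < R := by positivity
  obtain ⟨C, hC⟩ : BddAbove (range fun k => ‖c k * R ^ k‖) :=
    (h R).tendsto_atTop_zero.norm.bddAbove_range
  have hq : |x| / R < 1 := (div_lt_one hR).mpr (by linarith [abs_nonneg x])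
  refine .of_nonneg_of_le (fun k => norm_nonneg _) (fun k => ?_)
    ((summable_geometric_of_lt_one (by positivity) hq).mul_left C)
  calc ‖c k * x ^ k‖ = ‖c k * R ^ k‖ * (|x| / R) ^ k := by
        simp only [norm_mul, norm_pow, Real.norm_eq_abs, abs_of_pos hR, div_pow]
        field_simp
    _ ≤ C * (|x| / R) ^ k := by gcongr; exact hC ⟨k, rfl⟩

theorem summable_mul_pow_nat_add (h : ∀ x : ℝ, Summable fun k => c k * x ^ k) (m : ℕ)
    (x : ℝ) : Summable fun j => c (m + j) * x ^ j := by
  rcases eq_or_ne x 0 with rfl | hx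
  · exact summable_of_ne_finset_zero (s := {0}) fun j hj => by simp_all
  · refine (((summable_nat_add_iff m).2 (h x)).div_const (x ^ m)).congr fun j => ?_
    rw [pow_add, add_comm j m]
    field_simp

theorem hasDerivAt_tsum_mul_pow_succ_div (h : ∀ x : ℝ, Summable fun k => c k * x ^ k)
    (x : ℝ) :
    HasDerivAt (fun y => ∑' k, c k * y ^ (k + 1) / (k + 1)) (∑' k, c k * x ^ k) x := by
  set R : ℝ := |x| + 1
  refine hasDerivAt_tsum_of_isPreconnected (g := fun k y => c k * y ^ (k + 1) / (k + 1))
    (g' := fun k y => c k * y ^ k) (summable_norm_mul_pow_of_forall_summable h R)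
    Metric.isOpen_ball (convex_ball (0 : ℝ) R).isPreconnected (fun k y _ => ?_) (fun k y hy => ?_)
    (Metric.mem_ball_self (by positivity : 0 < R)) ?_ (by simp [R])
  · refine (((hasDerivAt_pow (k + 1) y).const_mul (c k)).div_const ((k : ℝ) + 1)).congr_deriv ?_
    rw [Nat.add_sub_cancel]
    push_cast
    field_simp
  · rw [mem_ball_zero_iff] at hy
    rw [norm_mul, norm_mul, norm_pow, norm_pow, Real.norm_of_nonneg (by positivity : 0 ≤ R)]
    gcongr
  · simp

theorem tendsto_tsum_mul_pow_succ_div_zero (h : ∀ x : ℝ, Summable fun k => c k * x ^ k) :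
    Tendsto (fun y => ∑' k, c k * y ^ (k + 1) / (k + 1)) (nhds 0) (nhds 0) := by
  simpa using (hasDerivAt_tsum_mul_pow_succ_div h 0).continuousAt.tendsto

theorem HasSum.eq_sum_range_add_pow_mul_tsum {x s : ℝ} (hs : HasSum (fun k => c k * x ^ k) s)
    (m : ℕ) : s = ∑ k ∈ Finset.range m, c k * x ^ k + x ^ m * ∑' j, c (m + j) * x ^ j := by
  rw [← hs.tsum_eq, ← hs.summable.sum_add_tsum_nat_add m, ← tsum_mul_left]
  congr 1
  refine tsum_congr fun j => ?_
  rw [add_comm j m, pow_add]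
  ring

end EntirePowerSeries

theorem hasSum_mul_pow_of_differentiable {F : ℂ → ℂ} {f : ℝ → ℝ} {c : ℕ → ℝ}
    (hF : Differentiable ℂ F) (hFf : ∀ x : ℝ, F x = f x)
    (hc : ∀ k, (c k : ℂ) = iteratedDeriv k F 0 / (Nat.factorial k)) (x : ℝ) :
    HasSum (fun k => c k * x ^ k) (f x) := by
  have h := Complex.hasSum_taylorSeries_of_entire hF 0 x
  rw [hFf] at h
  refine Complex.hasSum_ofReal.mp (h.congr_fun fun k => ?_)
  push_cast
  rw [hc, smul_eq_mul, smul_eq_mul, sub_zero]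
  field_simp

theorem hasDerivAt_div_mul_pow {d : ℕ} (hd : d ≠ 0) (b : ℝ) {x : ℝ} (hx : x ≠ 0) :
    HasDerivAt (fun y => b / (d * y ^ d)) (-(b / x ^ (d + 1))) x := by
  have hd' : (d : ℝ) ≠ 0 := Nat.cast_ne_zero.mpr hd
  refine ((((hasDerivAt_pow d x).const_mul (d : ℝ)).inv (by positivity)).const_mul b).congr_deriv
    ?_
  obtain ⟨e, rfl⟩ := Nat.exists_eq_succ_of_ne_zero hd
  simp only [Nat.succ_sub_one, pow_succ]
  field_simp

theorem tendsto_atTop_of_hasDerivAt_of_integrableOn_Ioi {Φ h : ℝ → ℝ} {a : ℝ}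
    (hderiv : ∀ x ∈ Ici a, HasDerivAt Φ (h x) x) (hint : IntegrableOn h (Ioi a)) :
    Tendsto Φ atTop (nhds (Φ a + ∫ x in Ioi a, h x)) := by
  refine ((intervalIntegral_tendsto_integral_Ioi a hint tendsto_id).const_add (Φ a)).congr' ?_
  filter_upwards [eventually_ge_atTop a] with b hab
  rw [id, intervalIntegral.integral_eq_sub_of_hasDerivAt
    (fun x hx => hderiv x (uIcc_of_le hab ▸ hx).1)
    ((intervalIntegrable_iff_integrableOn_Ioc_of_le hab).2 (hint.mono_set Ioc_subset_Ioi_self))]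
  ring

theorem integrableOn_Ioi_div_pow {f : ℝ → ℝ} (hf : Continuous f) {m : ℕ}
    (hint : IntegrableOn (fun x => f x / x ^ m) (Ici 1)) {ε : ℝ} (hε : 0 < ε) :
    IntegrableOn (fun x => f x / x ^ m) (Ioi ε) := by
  have hIcc : IntegrableOn (fun x => f x / x ^ m) (Icc ε 1) :=
    ContinuousOn.integrableOn_Icc <| hf.continuousOn.div (continuous_pow m).continuousOn
      fun x hx => pow_ne_zero m (hε.trans_le hx.1).ne'
  exact (hIcc.union hint).mono_set fun x hx => (le_total x 1).imp (fun h => ⟨hx.le, h⟩) id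

noncomputable def poleSum (c : ℕ → ℝ) (m : ℕ) (x : ℝ) : ℝ :=
  ∑ k ∈ Finset.range (m - 1), c k / (((m - k - 1 : ℕ) : ℝ) * x ^ (m - k - 1))

noncomputable def finitePartPrimitive (c : ℕ → ℝ) (m : ℕ) (x : ℝ) : ℝ :=
  ∑' j : ℕ, c (m + j) * x ^ (j + 1) / (j + 1) + c (m - 1) * Real.log x - poleSum c m x

theorem tendsto_poleSum_atTop (c : ℕ → ℝ) (m : ℕ) : Tendsto (poleSum c m) atTop (nhds 0) := by
  rw [← Finset.sum_const_zero (s := Finset.range (m - 1))]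
  refine tendsto_finsetSum _ fun k hk => tendsto_const_nhds.div_atTop ?_
  have hd : m - k - 1 ≠ 0 := by have := Finset.mem_range.mp hk; omega
  exact (tendsto_pow_atTop hd).const_mul_atTop (by positivity)

theorem hasDerivAt_finitePartPrimitive {c : ℕ → ℝ} {f : ℝ → ℝ}
    (hs : ∀ x, HasSum (fun k => c k * x ^ k) (f x)) {m : ℕ} (hm : 1 ≤ m) {x : ℝ} (hx : 0 < x) :
    HasDerivAt (finitePartPrimitive c m) (f x / x ^ m) x := by
  obtain ⟨n, rfl⟩ : ∃ n, m = n + 1 := ⟨m - 1, by omega⟩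
  have hG := hasDerivAt_tsum_mul_pow_succ_div
    (summable_mul_pow_nat_add (fun x => (hs x).summable) (n + 1)) x
  have hlog := (Real.hasDerivAt_log hx.ne').const_mul (c (n + 1 - 1))
  have hpole : HasDerivAt (poleSum c (n + 1))
      (∑ k ∈ Finset.range (n + 1 - 1), -(c k / x ^ (n + 1 - k - 1 + 1))) x :=
    HasDerivAt.fun_sum fun k hk => hasDerivAt_div_mul_pow (d := n + 1 - k - 1)
      (by have := Finset.mem_range.mp hk; omega) (c k) hx.ne'
  refine ((hG.add hlog).sub hpole).congr_deriv ?_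
  have hterm : ∀ k ∈ Finset.range n,
      c k / x ^ (n + 1 - k - 1 + 1) * x ^ (n + 1) = c k * x ^ k := by
    intro k hk
    have := Finset.mem_range.mp hk
    rw [div_mul_eq_mul_div, div_eq_iff (by positivity), mul_assoc, ← pow_add]
    congr 2
    omega
  simp only [Nat.add_sub_cancel] at hterm ⊢
  rw [(hs x).eq_sum_range_add_pow_mul_tsum (n + 1), eq_div_iff (by positivity),
    Finset.sum_range_succ, Finset.sum_neg_distrib, sub_neg_eq_add, add_mul, add_mul,
    Finset.sum_mul, Finset.sum_congr rfl hterm, pow_succ]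
  field_simp
  ring

/-- Finite part of `∫_0^∞ f(x)/x^m dx` for `f` with entire complex extension and
`f(x)/x^m` integrable at infinity: the regularized limit exists and equals
`lim_{a→∞} [c_{m-1} ln a + Σ_{k=m}^∞ c_k a^{k-m+1}/(k-m+1)]`. -/
theorem stmt_1 (f : ℝ → ℝ) (F : ℂ → ℂ) (c : ℕ → ℝ)
    (hF : Differentiable ℂ F) (hFf : ∀ x : ℝ, F x = f x)
    (hc : ∀ k, (c k : ℂ) = iteratedDeriv k F 0 / (Nat.factorial k))
    (m : ℕ) (hm : 1 ≤ m)
    (hint : IntegrableOn (fun x => f x / x ^ m) (Set.Ici 1)) :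
    ∃ L : ℝ,
      Tendsto
        (fun ε : ℝ =>
          (∫ x in Set.Ioi ε, f x / x ^ m) -
            ((∑ k ∈ Finset.range (m - 1),
                c k / (((m - k - 1 : ℕ) : ℝ) * ε ^ (m - k - 1))) -
              c (m - 1) * Real.log ε))
        (nhdsWithin 0 (Set.Ioi 0)) (nhds L) ∧
      Tendsto
        (fun a : ℝ => c (m - 1) * Real.log a +
          ∑' j : ℕ, c (m + j) * a ^ (j + 1) / (j + 1))
        atTop (nhds L) := by
  have hs := hasSum_mul_pow_of_differentiable hF hFf hc
  have hf : Continuous f := by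
    have hre : (fun x : ℝ => (F x).re) = f := funext fun x => by simp [hFf]
    exact hre ▸ Complex.continuous_re.comp (hF.continuous.comp Complex.continuous_ofReal)
  have hlim : ∀ ε > 0, Tendsto (finitePartPrimitive c m) atTop
      (nhds (finitePartPrimitive c m ε + ∫ x in Ioi ε, f x / x ^ m)) := fun ε hε =>
    tendsto_atTop_of_hasDerivAt_of_integrableOn_Ioi
      (fun x hx => hasDerivAt_finitePartPrimitive hs hm (hε.trans_le hx))
      (integrableOn_Ioi_div_pow hf hint hε)
  set L := finitePartPrimitive c m 1 + ∫ x in Ioi 1, f x / x ^ m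
  refine ⟨L, ?_, ?_⟩
  · have hG := tendsto_tsum_mul_pow_succ_div_zero
      (summable_mul_pow_nat_add (fun x => (hs x).summable) m)
    have hL := (tendsto_const_nhds (x := L)).sub (hG.mono_left (nhdsWithin_le_nhds (s := Ioi 0)))
    rw [sub_zero] at hL
    refine hL.congr' ?_
    filter_upwards [self_mem_nhdsWithin] with ε hε
    have hconst : finitePartPrimitive c m ε + ∫ x in Ioi ε, f x / x ^ m = L :=
      tendsto_nhds_unique (hlim ε hε) (hlim 1 one_pos)
    simp only [finitePartPrimitive, poleSum] at hconst
    linarith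
  · have hL := (hlim 1 one_pos).add (tendsto_poleSum_atTop c m)
    rw [add_zero] at hL
    refine hL.congr fun a => ?_
    simp only [finitePartPrimitive]
    ring
end

section
/- Let F : ℂ → ℂ be entire with F real-valued on the real axis, let f be its restriction to ℝ with Taylor coefficients c_k = F^{(k)}(0)/k!, let m ≥ 1 be an integer, 0 < ν < 1 and a > 0. Then the finite part integral ⨍_0^a f(x)/x^{m+ν} dx, defined as the limit as ε → 0⁺ of [∫_ε^a f(x) x^{-m-ν} dx − Σ_{k=0}^{m-1} c_k ε^{k+1-m-ν}/(m+ν-k-1)], equals (1/(e^{-2πiν} − 1)) ∫_0^{2π} F(a e^{iθ}) a^{1-m-ν} e^{i(1-m-ν)θ} i dθ; in particular this expression is real. -/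
open Filter MeasureTheory Set Complex Topology Interval

/-!
Expand `F z = ∑ c_k z ^ k` and put `s = m + ν`. Termwise,
`∫_ε^a f x / x ^ s = ∑_k (P_k a - P_k ε)`, where `P_k = primitiveTerm c s k` is the
antiderivative `x ↦ c_k x ^ (k + 1 - s) / (k + 1 - s)` of `x ↦ c_k x ^ (k - s)`.
The terms `k < m` of `∑_k P_k ε` are exactly the subtracted divergent ones, while the tail
`∑_{k ≥ m} P_k ε = O(ε ^ (1 - ν))` vanishes, so the finite part is `∑_k P_k a`.
On the circle `|z| = a` the `k`-th term of the contour integral is `P_k a (e^{-2πiν} - 1)`,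
because `e^{2πi(k + 1 - s)} = e^{-2πiν}`.
-/

noncomputable def primitiveTerm (c : ℕ → ℝ) (s : ℝ) (k : ℕ) (x : ℝ) : ℝ :=
  c k * x ^ ((k : ℝ) + 1 - s) / ((k : ℝ) + 1 - s)

theorem hasSum_taylorSeries_of_differentiable {F : ℂ → ℂ} (hF : Differentiable ℂ F)
    {c : ℕ → ℝ} (hc : ∀ k, (c k : ℂ) = iteratedDeriv k F 0 / (Nat.factorial k))
    (z : ℂ) :
    HasSum (fun k => (c k : ℂ) * z ^ k) (F z) := by
  have hterm : (fun k => (c k : ℂ) * z ^ k) =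
      fun k => ((Nat.factorial k : ℂ))⁻¹ • (z - 0) ^ k • iteratedDeriv k F 0 := by
    funext k
    rw [hc k, smul_eq_mul, smul_eq_mul, sub_zero]
    ring
  exact hterm ▸ Complex.hasSum_taylorSeries_of_entire hF 0 z

theorem summable_abs_mul_pow {c : ℕ → ℝ} {r : ℝ} (hr : 0 ≤ r)
    (h : Summable fun k => c k * r ^ k) : Summable fun k => |c k| * r ^ k := by
  simpa only [abs_mul, abs_pow, abs_of_nonneg hr] using h.abs

theorem summable_abs_nat_add_mul_pow {c : ℕ → ℝ} {r : ℝ} (hr : 0 < r)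
    (h : Summable fun k => |c k| * r ^ k) (m : ℕ) :
    Summable fun i => |c (i + m)| * r ^ i := by
  refine ((summable_nat_add_iff m).2 h).div_const (r ^ m) |>.congr fun i => ?_
  rw [pow_add, mul_div_assoc, mul_div_cancel_right₀ _ (pow_ne_zero m hr.ne')]

theorem exp_neg_two_pi_I_mul_ne_one {ν : ℝ} (h0 : 0 < ν) (h1 : ν < 1) :
    exp (-2 * Real.pi * I * ν) ≠ 1 := by
  intro h
  obtain ⟨n, hn⟩ := exp_eq_one_iff.1 h
  have hνn : ((-ν : ℝ) : ℂ) = n :=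
    mul_right_cancel₀ two_pi_I_ne_zero (by rw [← hn]; push_cast; ring)
  have hνn' : -ν = n := by exact_mod_cast hνn
  have hlo : (-1 : ℤ) < n := by exact_mod_cast (show (-1 : ℝ) < n by linarith)
  have hhi : n < 0 := by exact_mod_cast (show (n : ℝ) < 0 by linarith)
  omega

section

variable {c : ℕ → ℝ} {s a : ℝ} {m : ℕ}

theorem natCast_add_one_sub_ne_zero (hms : (m : ℝ) < s) (hsm : s < m + 1) (k : ℕ) :
    (k : ℝ) + 1 - s ≠ 0 := by
  rcases lt_or_ge k m with hk | hk
  · have : (k : ℝ) + 1 ≤ m := by exact_mod_cast hk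
    exact (by linarith : (k : ℝ) + 1 - s < 0).ne
  · have : (m : ℝ) ≤ k := by exact_mod_cast hk
    exact (by linarith : (0 : ℝ) < k + 1 - s).ne'

theorem hasSum_intervalIntegral_div_rpow {f : ℝ → ℝ}
    (hf : ∀ x ∈ Ioc 0 a, HasSum (fun k => c k * x ^ k) (f x))
    (hs : ∀ k : ℕ, (k : ℝ) + 1 - s ≠ 0) {ε : ℝ} (hε : 0 < ε) (hεa : ε ≤ a) :
    HasSum (fun k => primitiveTerm c s k a - primitiveTerm c s k ε)
      (∫ x in ε..a, f x / x ^ s) := by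
  have ha : 0 < a := hε.trans_le hεa
  have hsum := summable_abs_mul_pow ha.le (hf a ⟨ha, le_rfl⟩).summable
  have hIoc : Ι ε a = Ioc ε a := uIoc_of_le hεa
  have hcont : ∀ r : ℝ, ContinuousOn (fun x : ℝ => x ^ r) (Icc ε a) := fun r =>
    continuousOn_id.rpow_const fun x hx => Or.inl (hε.trans_le hx.1).ne'
  obtain ⟨M, hM⟩ := isCompact_Icc.exists_bound_of_continuousOn (hcont (-s))
  have hterm : ∀ k : ℕ, ∫ x in ε..a, c k * x ^ ((k : ℝ) - s) =
      primitiveTerm c s k a - primitiveTerm c s k ε := by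
    intro k
    have hk : (k : ℝ) - s + 1 = k + 1 - s := by ring
    rw [intervalIntegral.integral_const_mul,
      integral_rpow (Or.inr ⟨fun h => hs k (by linarith), notMem_uIcc_of_lt hε ha⟩), hk,
      primitiveTerm, primitiveTerm]
    ring
  refine funext hterm ▸ intervalIntegral.hasSum_integral_of_dominated_convergence
    (fun k _ => |c k| * a ^ k * M) (fun k => ?_) (fun k => ?_)
    (.of_forall fun _ _ => hsum.mul_right M) intervalIntegrable_const
    (.of_forall fun x hx => ?_)
  · rw [hIoc]
    exact (continuousOn_const.mul ((hcont _).mono Ioc_subset_Icc_self)).aestronglyMeasurable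
      measurableSet_Ioc
  · refine .of_forall fun x hx => ?_
    rw [hIoc] at hx
    have hx0 : 0 < x := hε.trans hx.1
    rw [sub_eq_add_neg, Real.rpow_add hx0, Real.rpow_natCast, norm_mul, norm_mul, norm_pow,
      Real.norm_eq_abs, Real.norm_of_nonneg hx0.le, mul_assoc]
    gcongr
    · exact hx.2
    · exact hM x (Ioc_subset_Icc_self hx)
  · rw [hIoc] at hx
    have hx0 : 0 < x := hε.trans hx.1
    have hxk : ∀ k : ℕ, c k * x ^ k / x ^ s = c k * x ^ ((k : ℝ) - s) := fun k => by
      rw [Real.rpow_sub hx0, Real.rpow_natCast, mul_div_assoc]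
    simpa only [hxk] using (hf x ⟨hx0, hx.2⟩).div_const (x ^ s)

theorem abs_primitiveTerm_nat_add_le (hsm : s < m + 1) {ε : ℝ} (hε : 0 < ε) (hεa : ε ≤ a)
    (i : ℕ) :
    |primitiveTerm c s (i + m) ε| ≤
      |c (i + m)| * a ^ i * (ε ^ ((m : ℝ) + 1 - s) / (m + 1 - s)) := by
  have hexp : ((i + m : ℕ) : ℝ) + 1 - s = i + (m + 1 - s) := by push_cast; ring
  have hpos : 0 < (m : ℝ) + 1 - s := by linarith
  have ha : 0 < a := hε.trans_le hεa
  rw [primitiveTerm, hexp, Real.rpow_add hε, Real.rpow_natCast, abs_div, abs_mul, abs_mul,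
    abs_of_pos (by positivity : (0 : ℝ) < i + (m + 1 - s)), abs_pow, abs_of_pos hε,
    abs_of_pos (Real.rpow_pos_of_pos hε _)]
  calc |c (i + m)| * (ε ^ i * ε ^ ((m : ℝ) + 1 - s)) / (i + (m + 1 - s))
      ≤ |c (i + m)| * (a ^ i * ε ^ ((m : ℝ) + 1 - s)) / (m + 1 - s) := by
        gcongr
        linarith [(Nat.cast_nonneg i : (0 : ℝ) ≤ i)]
    _ = _ := by ring

theorem summable_primitiveTerm (hsm : s < m + 1) (hsum : Summable fun k => |c k| * a ^ k)
    {ε : ℝ} (hε : 0 < ε) (hεa : ε ≤ a) : Summable fun k => primitiveTerm c s k ε :=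
  (summable_nat_add_iff m).1 <| Summable.of_norm_bounded
    ((summable_abs_nat_add_mul_pow (hε.trans_le hεa) hsum m).mul_right _)
    (abs_primitiveTerm_nat_add_le hsm hε hεa)

theorem tendsto_tsum_primitiveTerm_nat_add (hsm : s < m + 1) (ha : 0 < a)
    (hsum : Summable fun k => |c k| * a ^ k) :
    Tendsto (fun ε => ∑' i, primitiveTerm c s (i + m) ε) (𝓝[>] 0) (𝓝 0) := by
  have hpos : 0 < (m : ℝ) + 1 - s := by linarith
  set B := ∑' i, |c (i + m)| * a ^ i
  have hbound : Tendsto (fun ε : ℝ => B * (ε ^ ((m : ℝ) + 1 - s) / (m + 1 - s))) (𝓝[>] 0)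
      (𝓝 0) := by
    have h := ((Real.continuousAt_rpow_const 0 _ (Or.inr hpos.le)).tendsto.div_const
      ((m : ℝ) + 1 - s)).const_mul B
    rw [Real.zero_rpow hpos.ne', zero_div, mul_zero] at h
    exact h.mono_left nhdsWithin_le_nhds
  refine squeeze_zero_norm' ?_ hbound
  filter_upwards [Ioc_mem_nhdsGT ha] with ε ⟨hε, hεa⟩
  exact tsum_of_norm_bounded ((summable_abs_nat_add_mul_pow ha hsum m).hasSum.mul_right _)
    (abs_primitiveTerm_nat_add_le hsm hε hεa)

theorem tendsto_intervalIntegral_div_rpow_sub_sum {f : ℝ → ℝ}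
    (hf : ∀ x ∈ Ioc 0 a, HasSum (fun k => c k * x ^ k) (f x)) (ha : 0 < a)
    (hms : (m : ℝ) < s) (hsm : s < m + 1) :
    Tendsto (fun ε => (∫ x in ε..a, f x / x ^ s) -
        ∑ k ∈ Finset.range m, c k * ε ^ ((k : ℝ) + 1 - s) / (s - (k + 1)))
      (𝓝[>] 0) (𝓝 (∑' k, primitiveTerm c s k a)) := by
  have hsum := summable_abs_mul_pow ha.le (hf a ⟨ha, le_rfl⟩).summable
  have hsplit : ∀ ε ∈ Ioc 0 a, (∫ x in ε..a, f x / x ^ s) -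
      ∑ k ∈ Finset.range m, c k * ε ^ ((k : ℝ) + 1 - s) / (s - (k + 1)) =
        ∑' k, primitiveTerm c s k a - ∑' i, primitiveTerm c s (i + m) ε := by
    rintro ε ⟨hε, hεa⟩
    have hint := (hasSum_intervalIntegral_div_rpow hf (natCast_add_one_sub_ne_zero hms hsm)
      hε hεa).tsum_eq
    have hhead : ∑ k ∈ Finset.range m, c k * ε ^ ((k : ℝ) + 1 - s) / (s - (k + 1)) =
        -∑ k ∈ Finset.range m, primitiveTerm c s k ε := by
      rw [← Finset.sum_neg_distrib]
      refine Finset.sum_congr rfl fun k _ => ?_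
      rw [primitiveTerm, show s - (k + 1) = -((k : ℝ) + 1 - s) by ring, div_neg]
    rw [← hint, hhead, Summable.tsum_sub (summable_primitiveTerm hsm hsum ha le_rfl)
      (summable_primitiveTerm hsm hsum hε hεa),
      ← (summable_primitiveTerm hsm hsum hε hεa).sum_add_tsum_nat_add m]
    ring
  have hlim := (tendsto_tsum_primitiveTerm_nat_add hsm ha hsum).const_sub
    (∑' k, primitiveTerm c s k a)
  rw [sub_zero] at hlim
  refine hlim.congr' ?_
  filter_upwards [Ioc_mem_nhdsGT ha] with ε hε
  exact (hsplit ε hε).symm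

theorem integral_circle_pow_mul (ha : 0 < a) {k : ℕ} (hk : (k : ℝ) + 1 - s ≠ 0) :
    ∫ θ in (0 : ℝ)..2 * Real.pi, ((a : ℂ) * exp (θ * I)) ^ k * ((a ^ (1 - s) : ℝ) : ℂ) *
        exp (I * (1 - s) * θ) * I =
      ((a ^ ((k : ℝ) + 1 - s) / ((k : ℝ) + 1 - s) : ℝ) : ℂ) *
        (exp (-2 * Real.pi * I * s) - 1) := by
  set μ : ℂ := (((k : ℝ) + 1 - s : ℝ) : ℂ) with hμ
  have hμ0 : I * μ ≠ 0 := mul_ne_zero I_ne_zero (ofReal_ne_zero.2 hk)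
  have hintegrand : ∀ θ : ℝ, ((a : ℂ) * exp (θ * I)) ^ k * ((a ^ (1 - s) : ℝ) : ℂ) *
      exp (I * (1 - s) * θ) * I =
        ((a ^ ((k : ℝ) + 1 - s) : ℝ) : ℂ) * I * exp (I * μ * θ) := by
    intro θ
    rw [show (k : ℝ) + 1 - s = k + (1 - s) by ring, Real.rpow_add ha, Real.rpow_natCast,
      mul_pow, ← exp_nat_mul, hμ]
    push_cast
    rw [show I * ((k : ℂ) + 1 - s) * θ = k * (θ * I) + I * (1 - s) * θ by ring, exp_add]
    ring
  have hperiod : exp (I * μ * (2 * Real.pi : ℝ)) = exp (-2 * Real.pi * I * s) := by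
    rw [hμ, show I * (((k : ℝ) + 1 - s : ℝ) : ℂ) * ((2 * Real.pi : ℝ) : ℂ) =
        ((k + 1 : ℕ) : ℤ) * (2 * Real.pi * I) + -2 * Real.pi * I * s by push_cast; ring,
      exp_add, exp_int_mul_two_pi_mul_I, one_mul]
  simp only [hintegrand]
  rw [intervalIntegral.integral_const_mul, integral_exp_mul_complex hμ0, hperiod, ofReal_zero,
    mul_zero, exp_zero, hμ]
  push_cast
  field_simp

theorem hasSum_integral_circle {F : ℂ → ℂ}
    (hF : ∀ z ∈ Metric.sphere (0 : ℂ) a, HasSum (fun k => (c k : ℂ) * z ^ k) (F z))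
    (ha : 0 < a) (hs : ∀ k : ℕ, (k : ℝ) + 1 - s ≠ 0) :
    HasSum (fun k => (primitiveTerm c s k a : ℂ) * (exp (-2 * Real.pi * I * s) - 1))
      (∫ θ in (0 : ℝ)..2 * Real.pi, F (a * exp (θ * I)) * ((a ^ (1 - s) : ℝ) : ℂ) *
        exp (I * (1 - s) * θ) * I) := by
  have hcircle : ∀ θ : ℝ, (a : ℂ) * exp (θ * I) ∈ Metric.sphere (0 : ℂ) a := by
    intro θ
    simp [norm_exp_ofReal_mul_I, abs_of_pos ha]
  have hsum : Summable fun k => |c k| * a ^ k := by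
    refine summable_abs_mul_pow ha.le (Complex.summable_ofReal.1 ?_)
    simpa only [ofReal_mul, ofReal_pow] using (hF a (by simpa using hcircle 0)).summable
  have hterm : ∀ k : ℕ, ∫ θ in (0 : ℝ)..2 * Real.pi,
      (c k : ℂ) * (((a : ℂ) * exp (θ * I)) ^ k * ((a ^ (1 - s) : ℝ) : ℂ) *
        exp (I * (1 - s) * θ) * I) =
        (primitiveTerm c s k a : ℂ) * (exp (-2 * Real.pi * I * s) - 1) := fun k => by
    rw [intervalIntegral.integral_const_mul, integral_circle_pow_mul ha (hs k), primitiveTerm]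
    push_cast
    ring
  refine funext hterm ▸ intervalIntegral.hasSum_integral_of_dominated_convergence
    (fun k _ => |c k| * a ^ k * a ^ (1 - s)) (fun k => ?_) (fun k => ?_)
    (.of_forall fun _ _ => hsum.mul_right _) intervalIntegrable_const
    (.of_forall fun θ _ => ?_)
  · exact Continuous.aestronglyMeasurable (by fun_prop)
  · refine .of_forall fun θ _ => ?_
    simp [abs_of_pos ha, abs_of_pos (Real.rpow_pos_of_pos ha _), norm_exp, mul_assoc]
  · simpa only [mul_assoc] using (hF _ (hcircle θ)).mul_right
      (((a ^ (1 - s) : ℝ) : ℂ) * exp (I * (1 - s) * θ) * I)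

end

theorem stmt_7_general (F : ℂ → ℂ) (hF : Differentiable ℂ F)
    (f : ℝ → ℝ) (hf : ∀ x : ℝ, f x = (F x).re)
    (c : ℕ → ℝ) (hc : ∀ k, (c k : ℂ) = iteratedDeriv k F 0 / (Nat.factorial k))
    (m : ℕ) (ν : ℝ) (hν0 : 0 < ν) (hν1 : ν < 1) (a : ℝ) (ha : 0 < a) :
    ∃ L : ℝ,
      Tendsto
        (fun ε : ℝ =>
          (∫ x in ε..a, f x / x ^ ((m : ℝ) + ν)) -
            ∑ k ∈ Finset.range m,
              c k * ε ^ ((k : ℝ) + 1 - m - ν) / ((m : ℝ) + ν - k - 1))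
        (nhdsWithin 0 (Set.Ioi 0)) (nhds L) ∧
      (L : ℂ) = (1 / (Complex.exp (-2 * Real.pi * Complex.I * (ν : ℂ)) - 1)) *
        ∫ θ in (0 : ℝ)..(2 * Real.pi),
          F ((a : ℂ) * Complex.exp ((θ : ℂ) * Complex.I)) *
            ((a ^ ((1 : ℝ) - m - ν) : ℝ) : ℂ) *
            Complex.exp (Complex.I * (1 - (m : ℂ) - (ν : ℂ)) * (θ : ℂ)) *
            Complex.I := by
  have hTaylor := hasSum_taylorSeries_of_differentiable hF hc
  have hTaylorReal : ∀ x : ℝ, HasSum (fun k => c k * x ^ k) (f x) := fun x => by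
    simpa only [hf, ← ofReal_pow, ← ofReal_mul, ofReal_re] using hasSum_re (hTaylor x)
  have hms : (m : ℝ) < m + ν := by linarith
  have hsm : (m : ℝ) + ν < m + 1 := by linarith
  have hE : exp (-2 * Real.pi * I * ((m + ν : ℝ) : ℂ)) = exp (-2 * Real.pi * I * ν) := by
    rw [show -2 * Real.pi * I * ((m + ν : ℝ) : ℂ) =
        ((-m : ℤ) : ℂ) * (2 * Real.pi * I) + -2 * Real.pi * I * ν by push_cast; ring,
      exp_add, exp_int_mul_two_pi_mul_I, one_mul]
  have hE1 := sub_ne_zero.2 (exp_neg_two_pi_I_mul_ne_one hν0 hν1)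
  have hcircle := hasSum_integral_circle (fun z _ => hTaylor z) ha
    (natCast_add_one_sub_ne_zero hms hsm)
  rw [hE] at hcircle
  refine ⟨∑' k, primitiveTerm c (m + ν) k a, ?_, ?_⟩
  · simpa only [sub_sub] using
      tendsto_intervalIntegral_div_rpow_sub_sum (fun x _ => hTaylorReal x) ha hms hsm
  · have hL := hcircle.div_const (exp (-2 * Real.pi * I * ν) - 1)
    simp only [mul_div_cancel_right₀ _ hE1] at hL
    rw [ofReal_tsum, hL.tsum_eq]
    push_cast
    simp only [sub_sub, one_div_mul_eq_div]

/-- Contour integral representation of the finite part integral `⨍_0^a f(x)/x^{m+ν} dx`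
for an entire `F` real on the real axis, `0 < ν < 1`: the regularized limit exists and,
as a complex number, equals
`(1/(e^{-2πiν} − 1)) ∫_0^{2π} F(a e^{iθ}) a^{1-m-ν} e^{i(1-m-ν)θ} i dθ`. -/
theorem stmt_7 (F : ℂ → ℂ) (hF : Differentiable ℂ F)
    (hreal : ∀ x : ℝ, (F x).im = 0)
    (f : ℝ → ℝ) (hf : ∀ x : ℝ, f x = (F x).re)
    (c : ℕ → ℝ) (hc : ∀ k, (c k : ℂ) = iteratedDeriv k F 0 / (Nat.factorial k))
    (m : ℕ) (hm : 1 ≤ m) (ν : ℝ) (hν0 : 0 < ν) (hν1 : ν < 1) (a : ℝ) (ha : 0 < a) :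
    ∃ L : ℝ,
      Tendsto
        (fun ε : ℝ =>
          (∫ x in ε..a, f x / x ^ ((m : ℝ) + ν)) -
            ∑ k ∈ Finset.range m,
              c k * ε ^ ((k : ℝ) + 1 - m - ν) / ((m : ℝ) + ν - k - 1))
        (nhdsWithin 0 (Set.Ioi 0)) (nhds L) ∧
      (L : ℂ) = (1 / (Complex.exp (-2 * Real.pi * Complex.I * (ν : ℂ)) - 1)) *
        ∫ θ in (0 : ℝ)..(2 * Real.pi),
          F ((a : ℂ) * Complex.exp ((θ : ℂ) * Complex.I)) *
            ((a ^ ((1 : ℝ) - m - ν) : ℝ) : ℂ) *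
            Complex.exp (Complex.I * (1 - (m : ℂ) - (ν : ℂ)) * (θ : ℂ)) *
            Complex.I :=
  stmt_7_general F hF f hf c hc m ν hν0 hν1 a ha
end
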